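/- The map x ↦ (Arg(x), Arg((x+1)/(1−x))), where Arg denotes the principal argument, restricts to a bijection from the open upper half-plane {x ∈ ℂ : Im(x) > 0} onto the open square (0,π) × (0,π), and to a bijection from the open lower half-plane {x ∈ ℂ : Im(x) < 0} onto the open square (−π,0) × (−π,0). -/

import Mathlib

/-!
For `z` in the open upper half-plane, `arg z ∈ (0, π)` and `cot (arg z) = Re z / Im z`, while
`cot` is a bijection from `(0, π)` onto `ℝ`. The map `w = (x + 1) / (1 - x)` preserves the upper
half-plane, and for `x = a + b i` it gives `Re w / Im w = (1 - a² - b²) / (2b)`. Thus it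
suffices that `x ↦ (a / b, (1 - a² - b²) / (2b))` maps `{b > 0}` bijectively onto `ℝ²`:
prescribing the values `(p, q)` forces `a = p b` and `(1 + p²) b² + 2 q b - 1 = 0`, a quadratic
whose roots have negative product, hence exactly one positive root. Complex conjugation negates
both arguments, which transports the result to the lower half-plane.
-/

open Real Set Function ComplexConjugate

namespace Complex

lemma arg_mem_Ioo_of_im_pos {z : ℂ} (hz : 0 < z.im) : arg z ∈ Ioo 0 π :=
  ⟨(arg_nonneg_iff.2 hz.le).lt_of_ne fun h => hz.ne' (arg_eq_zero_iff.1 h.symm).2,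
    arg_lt_pi_iff.2 (Or.inr hz.ne')⟩

lemma cot_arg {z : ℂ} (hz : z ≠ 0) : Real.cot (arg z) = z.re / z.im := by
  rw [Real.cot_eq_cos_div_sin, cos_arg hz, sin_arg,
    div_div_div_cancel_right₀ (norm_ne_zero_iff.2 hz)]

lemma arg_cot_add_I {φ : ℝ} (hφ : φ ∈ Ioo 0 π) : arg (Real.cot φ + I) = φ := by
  have hsin : 0 < Real.sin φ := sin_pos_of_pos_of_lt_pi hφ.1 hφ.2
  have hpolar : (Real.cot φ : ℂ) + I = ((Real.sin φ)⁻¹ : ℝ) * (cos φ + sin φ * I) := by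
    have : sin (φ : ℂ) ≠ 0 := by exact_mod_cast hsin.ne'
    rw [Real.cot_eq_cos_div_sin]
    push_cast
    field_simp
  rw [hpolar, arg_real_mul _ (inv_pos.2 hsin),
    arg_cos_add_sin_mul_I ⟨by linarith [hφ.1, pi_pos], hφ.2.le⟩]

lemma bijOn_arg_ofReal_add_I : BijOn (fun t : ℝ => arg (t + I)) univ (Ioo 0 π) :=
  InvOn.bijOn (f' := Real.cot)
    ⟨fun t _ => by simp [cot_arg (z := t + I) (by simp [Complex.ext_iff])],
      fun _ hφ => arg_cot_add_I hφ⟩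
    (fun _ _ => arg_mem_Ioo_of_im_pos (by simp)) (mapsTo_univ _ _)

lemma arg_eq_arg_re_div_im_add_I {z : ℂ} (hz : 0 < z.im) :
    arg z = arg ((z.re / z.im : ℝ) + I) := by
  rw [← cot_arg (ne_of_apply_ne im hz.ne'), arg_cot_add_I (arg_mem_Ioo_of_im_pos hz)]

lemma re_add_one_div_one_sub (x : ℂ) :
    ((x + 1) / (1 - x)).re = (1 - normSq x) / normSq (1 - x) := by
  rw [div_re, ← add_div]
  simp only [add_re, add_im, sub_re, sub_im, one_re, one_im, normSq_apply]
  ring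

lemma im_add_one_div_one_sub (x : ℂ) :
    ((x + 1) / (1 - x)).im = 2 * x.im / normSq (1 - x) := by
  rw [div_im, ← sub_div]
  simp only [add_re, add_im, sub_re, sub_im, one_re, one_im]
  ring

lemma re_div_im_add_one_div_one_sub (x : ℂ) :
    ((x + 1) / (1 - x)).re / ((x + 1) / (1 - x)).im = (1 - normSq x) / (2 * x.im) := by
  rw [re_add_one_div_one_sub, im_add_one_div_one_sub]
  rcases eq_or_ne x 1 with rfl | hx
  · simp
  · exact div_div_div_cancel_right₀ (normSq_pos.2 (sub_ne_zero.2 hx.symm)).ne' _ _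

lemma im_add_one_div_one_sub_pos {x : ℂ} (hx : 0 < x.im) : 0 < ((x + 1) / (1 - x)).im := by
  rw [im_add_one_div_one_sub]
  exact div_pos (by positivity)
    (normSq_pos.2 (sub_ne_zero.2 (ne_of_apply_ne im (by simpa using hx.ne))))

lemma bijOn_re_div_im_prod_one_sub_normSq_div :
    BijOn (fun x : ℂ => (x.re / x.im, (1 - normSq x) / (2 * x.im))) {x | 0 < x.im} univ := by
  refine ⟨mapsTo_univ _ _, ?_, ?_⟩
  · intro x (hx : 0 < x.im) y (hy : 0 < y.im) h
    obtain ⟨hratio, hquad⟩ := Prod.mk.inj h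
    set p := x.re / x.im
    have hxre : x.re = p * x.im := (div_mul_cancel₀ _ hx.ne').symm
    have hyre : y.re = p * y.im := hratio ▸ (div_mul_cancel₀ _ hy.ne').symm
    rw [normSq_apply, normSq_apply, hxre, hyre] at hquad
    field_simp at hquad
    have hfactor : (y.im - x.im) * (1 + (1 + p ^ 2) * x.im * y.im) = 0 := by
      linear_combination hquad
    have him : x.im = y.im := by
      rcases mul_eq_zero.1 hfactor with h | h
      · linarith
      · nlinarith [mul_pos hx hy, sq_nonneg p]
    exact Complex.ext (by rw [hxre, hyre, him]) him
  · rintro ⟨p, q⟩ -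
    set u := q + √(q ^ 2 + 1 + p ^ 2)
    have hsq : √(q ^ 2 + 1 + p ^ 2) ^ 2 = q ^ 2 + 1 + p ^ 2 := sq_sqrt (by positivity)
    have hu : 0 < u := by nlinarith [sqrt_nonneg (q ^ 2 + 1 + p ^ 2)]
    refine ⟨⟨p / u, 1 / u⟩, by simpa using hu, ?_⟩
    simp only [normSq_mk, Prod.mk.injEq]
    constructor
    · field_simp
    · field_simp
      linear_combination hsq

lemma arg_conj_of_im_ne_zero {z : ℂ} (hz : z.im ≠ 0) : arg (conj z) = -arg z := by
  rw [arg_conj, if_neg fun h => hz (arg_eq_pi_iff.1 h).2]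

end Complex

open Complex

noncomputable def argPair (x : ℂ) : ℝ × ℝ := (arg x, arg ((x + 1) / (1 - x)))

lemma argPair_conj {x : ℂ} (hx : x.im ≠ 0) : argPair (conj x) = -argPair x := by
  have hw : ((x + 1) / (1 - x)).im ≠ 0 := by
    rw [im_add_one_div_one_sub]
    exact div_ne_zero (by simpa using hx)
      (normSq_pos.2 (sub_ne_zero.2 (ne_of_apply_ne im (by simpa using hx.symm)))).ne'
  have hconj : (conj x + 1) / (1 - conj x) = conj ((x + 1) / (1 - x)) := by simp
  simp only [argPair, hconj, arg_conj_of_im_ne_zero hx, arg_conj_of_im_ne_zero hw, Prod.neg_mk]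

lemma bijOn_argPair_upperHalfPlane : BijOn argPair {x | 0 < x.im} (Ioo 0 π ×ˢ Ioo 0 π) := by
  have hcot := bijOn_arg_ofReal_add_I.prodMap bijOn_arg_ofReal_add_I
  rw [univ_prod_univ] at hcot
  refine (hcot.comp bijOn_re_div_im_prod_one_sub_normSq_div).congr fun x (hx : 0 < x.im) => ?_
  simp only [argPair, comp_apply, ← re_div_im_add_one_div_one_sub]
  rw [← arg_eq_arg_re_div_im_add_I hx,
    ← arg_eq_arg_re_div_im_add_I (im_add_one_div_one_sub_pos hx)]

lemma bijOn_argPair_lowerHalfPlane :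
    BijOn argPair {x | x.im < 0} (Ioo (-π) 0 ×ˢ Ioo (-π) 0) := by
  have hconj : BijOn conj {x : ℂ | x.im < 0} {x | 0 < x.im} :=
    (Involutive.toPerm (conj : ℂ → ℂ) conj_conj).bijOn fun x => by
      change 0 < (conj x).im ↔ x.im < 0
      simp
  have hneg : BijOn Neg.neg (Ioo 0 π ×ˢ Ioo 0 π) (Ioo (-π) 0 ×ˢ Ioo (-π) 0) :=
    (Equiv.neg _).bijOn fun p => by simp [and_comm]
  refine (hneg.comp (bijOn_argPair_upperHalfPlane.comp hconj)).congr fun x (hx : x.im < 0) => ?_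
  simp only [comp_apply, argPair_conj hx.ne, neg_neg]

/-- The map `x ↦ (Arg x, Arg((x+1)/(1-x)))` (principal arguments) restricts to a
bijection from the open upper half-plane onto `(0,π) × (0,π)`, and to a bijection
from the open lower half-plane onto `(-π,0) × (-π,0)`. -/
theorem arg_map_bijOn_half_planes :
    Set.BijOn (fun x : ℂ => (Complex.arg x, Complex.arg ((x + 1) / (1 - x))))
      {x : ℂ | 0 < x.im} (Set.Ioo 0 π ×ˢ Set.Ioo 0 π) ∧
    Set.BijOn (fun x : ℂ => (Complex.arg x, Complex.arg ((x + 1) / (1 - x))))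
      {x : ℂ | x.im < 0} (Set.Ioo (-π) 0 ×ˢ Set.Ioo (-π) 0) :=
  ⟨bijOn_argPair_upperHalfPlane, bijOn_argPair_lowerHalfPlane⟩
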